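/- arXiv:1810.07825 — 2 statements merged into one kernel-verified Lean document; each statement's English description precedes it below -/
import Mathlib

section
/- If G is a planar graph and X is a cutset of G such that G − X has at least three connected components, each of which contains a vertex adjacent to every vertex of X, and |X| ≥ 3, then G contains a K_{3,3} minor; hence no such configuration exists in a planar graph. -/
/-!
Three vertices of `X` and, in three distinct components of `G - X`, a vertex adjacent to all of
`X` span a copy of `K₃,₃` in `G`; a subgraph is a minor with singleton branch sets.
-/

open SimpleGraph

/-- `X` is a cutset of `G`: deleting `X` disconnects the remaining graph. -/
def IsCutset {V : Type*} (G : SimpleGraph V) (X : Set V) : Prop :=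
  ¬ (G.induce Xᶜ).Connected

/-- `G` has an `H`-minor, witnessed by branch sets. -/
def HasMinorOf {V W : Type*} (G : SimpleGraph V) (H : SimpleGraph W) : Prop :=
  ∃ B : W → Set V, (∀ w, (B w).Nonempty) ∧ (∀ w, (G.induce (B w)).Connected) ∧
    (Pairwise fun w w' => Disjoint (B w) (B w')) ∧
    ∀ w w', H.Adj w w' → ∃ u ∈ B w, ∃ v ∈ B w', G.Adj u v

/-- Planarity, via Wagner's characterization: no `K₅` minor and no `K₃,₃` minor. -/
def IsPlanar {V : Type*} (G : SimpleGraph V) : Prop :=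
  ¬ HasMinorOf G (completeGraph (Fin 5)) ∧
  ¬ HasMinorOf G (completeBipartiteGraph (Fin 3) (Fin 3))

theorem Function.Embedding.nonempty_fin_of_le_natCard {α : Type*} {n : ℕ}
    (h : n ≤ Nat.card α) : Nonempty (Fin n ↪ α) := by
  cases finite_or_infinite α
  · have := Fintype.ofFinite α
    exact Function.Embedding.nonempty_of_card_le (by simpa [Nat.card_eq_fintype_card] using h)
  · exact ⟨Fin.valEmbedding.trans (Infinite.natEmbedding α)⟩

theorem SimpleGraph.induce_singleton_connected {V : Type*} (G : SimpleGraph V) (v : V) :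
    (G.induce {v}).Connected :=
  have : Nonempty ({v} : Set V) := ⟨⟨v, rfl⟩⟩
  ⟨fun a b => by rw [Subsingleton.elim a b]⟩

theorem SimpleGraph.IsContained.hasMinorOf {V W : Type*} {G : SimpleGraph V} {H : SimpleGraph W}
    (h : H ⊑ G) : HasMinorOf G H := by
  obtain ⟨f⟩ := h
  refine ⟨fun w => {f w}, fun w => Set.singleton_nonempty _,
    fun w => G.induce_singleton_connected _,
    fun w w' hne => Set.disjoint_singleton.mpr fun h => hne (f.injective h), ?_⟩
  exact fun w w' hadj => ⟨f w, rfl, f w', rfl, f.toHom.map_adj hadj⟩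

theorem SimpleGraph.completeBipartiteGraph_isContained {α β V : Type*} {G : SimpleGraph V}
    (f : α ↪ V) (g : β ↪ V) (hadj : ∀ a b, G.Adj (f a) (g b)) :
    completeBipartiteGraph α β ⊑ G := by
  refine ⟨⟨⟨Sum.elim f g, ?_⟩, ?_⟩⟩
  · rintro (a | b) (a' | b') h
    · simp at h
    · exact hadj a b'
    · exact (hadj a' b).symm
    · simp at h
  · rintro (a | b) (a' | b') h
    · simp [f.injective h]
    · exact absurd h (hadj a b').ne
    · exact absurd h.symm (hadj a' b).ne
    · simp [g.injective h]

theorem k33_minor_of_three_components_general {V : Type*} (G : SimpleGraph V)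
    (X : Set V) (hX : 3 ≤ X.ncard)
    (hcomp : 3 ≤ Nat.card (G.induce Xᶜ).ConnectedComponent)
    (hadj : ∀ C : (G.induce Xᶜ).ConnectedComponent,
      ∃ v : ↑Xᶜ, (G.induce Xᶜ).connectedComponentMk v = C ∧ ∀ x ∈ X, G.Adj (↑v) x) :
    HasMinorOf G (completeBipartiteGraph (Fin 3) (Fin 3)) ∧ ¬ IsPlanar G := by
  obtain ⟨x⟩ := Function.Embedding.nonempty_fin_of_le_natCard (α := X) hX
  obtain ⟨C⟩ := Function.Embedding.nonempty_fin_of_le_natCard hcomp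
  choose v hvC hvX using hadj
  let rep : Fin 3 ↪ V := ⟨fun i => v (C i), fun i j h => C.injective <| by
    rw [← hvC (C i), ← hvC (C j), Subtype.val_injective h]⟩
  have hminor : HasMinorOf G (completeBipartiteGraph (Fin 3) (Fin 3)) :=
    (completeBipartiteGraph_isContained rep (x.trans (Function.Embedding.subtype _))
      fun i j => hvX _ _ (x j).2).hasMinorOf
  exact ⟨hminor, fun hP => hP.2 hminor⟩

/-- if `G − X` has at least three components, each containing a
vertex adjacent to every vertex of `X`, and `|X| ≥ 3`, then `G` has a `K₃,₃`
minor; hence no such configuration exists in a planar graph. -/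
theorem k33_minor_of_three_components {V : Type*} [Fintype V] (G : SimpleGraph V)
    (X : Set V) (hX : 3 ≤ X.ncard) (hcut : IsCutset G X)
    (hcomp : 3 ≤ Nat.card (G.induce Xᶜ).ConnectedComponent)
    (hadj : ∀ C : (G.induce Xᶜ).ConnectedComponent,
      ∃ v : ↑Xᶜ, (G.induce Xᶜ).connectedComponentMk v = C ∧ ∀ x ∈ X, G.Adj (↑v) x) :
    HasMinorOf G (completeBipartiteGraph (Fin 3) (Fin 3)) ∧ ¬ IsPlanar G :=
  k33_minor_of_three_components_general G X hX hcomp hadj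
end

section
/- Let G be a 3-connected plane graph and let X = {x, y, z} be three vertices of G that are all incident to a common face f. Then X is not a 3-cutset of G. -/
open SimpleGraph

/-- `G` is 3-connected: at least 4 vertices, and removing fewer than 3 vertices
leaves the graph connected. -/
def ThreeConnected {V : Type*} [Fintype V] (G : SimpleGraph V) : Prop :=
  4 ≤ Fintype.card V ∧ ∀ X : Set V, X.ncard < 3 → (G.induce Xᶜ).Connected

/-!
Let `C` be the induced non-separating cycle and `X ⊆ C`. Every component `K` of `G - X` meets
`G - C`. Otherwise `K` lies on `C`, and since `C` is induced, `K` is a connected piece of a graph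
of maximum degree two; counting degrees, `2|K| ≥ 2|E(K)| + |∂K|` with `|E(K)| ≥ |K| - 1`, so `K`
has at most two neighbours on `C`. Hence at most two vertices of `X` attach to `K`, and deleting
them cuts `K` off from `G - C`, contradicting 3-connectivity. As `G - C` is connected, so is
`G - X`.
-/

namespace SimpleGraph

variable {V : Type*} {G : SimpleGraph V}

lemma Walk.end_mem_of_forall_adj_mem {K : Set V} (hK : ∀ a b, G.Adj a b → a ∈ K → b ∈ K)
    {a b : V} (p : G.Walk a b) (ha : a ∈ K) : b ∈ K := by
  induction p with
  | nil => exact ha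
  | cons h _ ih => exact ih (hK _ _ h ha)

lemma Connected.subset_of_forall_adj_mem {s K : Set V} (hs : (G.induce s).Connected)
    (hKs : (K ∩ s).Nonempty) (hK : ∀ a ∈ K, ∀ b ∈ s, G.Adj a b → b ∈ K) : s ⊆ K := by
  obtain ⟨a, haK, has⟩ := hKs
  intro b hbs
  obtain ⟨p⟩ := hs.preconnected ⟨a, has⟩ ⟨b, hbs⟩
  exact p.end_mem_of_forall_adj_mem (K := Subtype.val ⁻¹' K)
    (fun a' b' hab ha' => hK a' ha' b' b'.2 hab) haK

lemma ConnectedComponent.connected_induce_image_supp {s : Set V}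
    (Q : (G.induce s).ConnectedComponent) :
    (G.induce (Subtype.val '' Q.supp)).Connected := by
  let f : Q.toSimpleGraph →g G.induce (Subtype.val '' Q.supp) :=
    { toFun := fun v => ⟨v.1.1, v.1, v.2, rfl⟩
      map_rel' := id }
  refine Q.connected_toSimpleGraph.map f ?_
  rintro ⟨_, v, hv, rfl⟩
  exact ⟨⟨v, hv⟩, rfl⟩

lemma degree_induce_eq_ncard_neighborSet_inter [Fintype V] [DecidableRel G.Adj] {K : Set V}
    [DecidablePred (· ∈ K)] (k : K) :
    (G.induce K).degree k = (G.neighborSet k ∩ K).ncard := by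
  classical
  rw [← card_neighborFinset_eq_degree, ← Finset.card_map (.subtype (· ∈ K)),
    map_neighborFinset_induce, ← Set.ncard_coe_finset]
  simp

theorem ncard_boundary_le_two [Finite V] {K : Set V} (hK : (G.induce K).Connected)
    (hdeg : ∀ v ∈ K, (G.neighborSet v).ncard ≤ 2) :
    {w | w ∉ K ∧ ∃ k ∈ K, G.Adj k w}.ncard ≤ 2 := by
  classical
  have := Fintype.ofFinite V
  have hsplit (k : K) : (G.induce K).degree k + (G.neighborSet k \ K).ncard ≤ 2 := by
    rw [degree_induce_eq_ncard_neighborSet_inter, Set.ncard_inter_add_ncard_sdiff_eq_ncard]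
    exact hdeg k k.2
  have hedges := hK.card_vert_le_card_edgeSet_add_one
  rw [Nat.card_eq_fintype_card, Nat.card_eq_fintype_card, ← edgeFinset_card] at hedges
  have hsum := Finset.sum_le_sum fun k (_ : k ∈ Finset.univ) => hsplit k
  rw [Finset.sum_add_distrib, sum_degrees_eq_twice_card_edges] at hsum
  simp only [Finset.sum_const, Finset.card_univ, smul_eq_mul] at hsum
  calc {w | w ∉ K ∧ ∃ k ∈ K, G.Adj k w}.ncard
      ≤ (⋃ k : K, G.neighborSet k \ K).ncard := by
        refine Set.ncard_le_ncard ?_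
        rintro w ⟨hwK, k, hk, hkw⟩
        exact Set.mem_iUnion.mpr ⟨⟨k, hk⟩, hkw, hwK⟩
    _ ≤ ∑ k : K, (G.neighborSet k \ K).ncard := Set.ncard_iUnion_le_of_fintype _
    _ ≤ 2 := by lia

lemma Walk.induce_spanningCoe_toSubgraph_eq {u : V} {c : G.Walk u u}
    (hind : ∀ a ∈ c.support, ∀ b ∈ c.support, G.Adj a b → s(a, b) ∈ c.edges)
    {K : Set V} (hK : K ⊆ {v | v ∈ c.support}) :
    c.toSubgraph.spanningCoe.induce K = G.induce K := by
  ext a b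
  simp only [comap_adj, Function.Embedding.subtype_apply, Subgraph.spanningCoe_adj,
    Walk.adj_toSubgraph_iff_mem_edges]
  exact ⟨c.adj_of_mem_edges, hind _ (hK a.2) _ (hK b.2)⟩

namespace Walk.IsCycle

variable [Finite V] {u : V} {c : G.Walk u u}

theorem compl_subset_of_forall_adj_mem (hc : c.IsCycle)
    (hind : ∀ a ∈ c.support, ∀ b ∈ c.support, G.Adj a b → s(a, b) ∈ c.edges)
    (h3 : ∀ D : Set V, D.ncard < 3 → (G.induce Dᶜ).Connected)
    {X K : Set V} (hX : X ⊆ {v | v ∈ c.support}) (hKC : K ⊆ {v | v ∈ c.support})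
    (hKX : K ⊆ Xᶜ) (hK : (G.induce K).Connected)
    (hclosed : ∀ a ∈ K, ∀ b ∉ X, G.Adj a b → b ∈ K) : Xᶜ ⊆ K := by
  set D : Set V := {d ∈ X | ∃ k ∈ K, G.Adj k d}
  have hD : D.ncard ≤ 2 := by
    let H := c.toSubgraph.spanningCoe
    have hHK : (H.induce K).Connected := by
      rwa [induce_spanningCoe_toSubgraph_eq hind hKC]
    refine le_trans (Set.ncard_le_ncard ?_) <|
      ncard_boundary_le_two hHK fun v hv => (hc.ncard_neighborSet_toSubgraph_eq_two (hKC hv)).le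
    rintro d ⟨hdX, k, hk, hkd⟩
    exact ⟨fun hdK => hKX hdK hdX, k, hk,
      Walk.adj_toSubgraph_iff_mem_edges.mpr (hind _ (hKC hk) _ (hX hdX) hkd)⟩
  obtain ⟨v⟩ := hK.nonempty
  have hKD : ∀ a ∈ K, ∀ b ∈ Dᶜ, G.Adj a b → b ∈ K := by
    intro a ha b hbD hab
    by_cases hbX : b ∈ X
    · exact absurd ⟨hbX, a, ha, hab⟩ hbD
    · exact hclosed a ha b hbX hab
  have hDX : Xᶜ ⊆ Dᶜ := Set.compl_subset_compl.mpr fun d hd => hd.1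
  exact hDX.trans <| (h3 D (by lia)).subset_of_forall_adj_mem ⟨v, v.2, hDX (hKX v.2)⟩ hKD

theorem exists_reachable_notMem_support (hc : c.IsCycle)
    (hind : ∀ a ∈ c.support, ∀ b ∈ c.support, G.Adj a b → s(a, b) ∈ c.edges)
    (h3 : ∀ D : Set V, D.ncard < 3 → (G.induce Dᶜ).Connected)
    {t : V} (ht : t ∉ c.support)
    {X : Set V} (hX : X ⊆ {v | v ∈ c.support}) (v : ↥Xᶜ) :
    ∃ w : ↥Xᶜ, w.1 ∉ c.support ∧ (G.induce Xᶜ).Reachable v w := by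
  by_contra! hv
  let Q := (G.induce Xᶜ).connectedComponentMk v
  set K : Set V := Subtype.val '' Q.supp
  have hKC : K ⊆ {v | v ∈ c.support} := by
    rintro _ ⟨w, hw, rfl⟩
    by_contra hwC
    exact hv w hwC (ConnectedComponent.exact hw).symm
  have hKX : K ⊆ Xᶜ := by
    rintro _ ⟨w, -, rfl⟩
    exact w.2
  have hclosed : ∀ a ∈ K, ∀ b ∉ X, G.Adj a b → b ∈ K := by
    rintro _ ⟨a, ha, rfl⟩ b hbX hab
    exact ⟨⟨b, hbX⟩, (Q.mem_supp_congr_adj (show (G.induce Xᶜ).Adj a ⟨b, hbX⟩ from hab)).mp ha,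
      rfl⟩
  exact ht (hKC (hc.compl_subset_of_forall_adj_mem hind h3 hX hKC hKX
    Q.connected_induce_image_supp hclosed fun htX => ht (hX htX)))

theorem connected_induce_compl (hc : c.IsCycle)
    (hind : ∀ a ∈ c.support, ∀ b ∈ c.support, G.Adj a b → s(a, b) ∈ c.edges)
    (h3 : ∀ D : Set V, D.ncard < 3 → (G.induce Dᶜ).Connected)
    (hns : (G.induce {v | v ∉ c.support}).Connected)
    {X : Set V} (hX : X ⊆ {v | v ∈ c.support}) : (G.induce Xᶜ).Connected := by
  obtain ⟨t, ht⟩ := hns.nonempty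
  have hTX : {v | v ∉ c.support} ⊆ Xᶜ := fun v hv hvX => hv (hX hvX)
  have hreach (v : ↥Xᶜ) : (G.induce Xᶜ).Reachable v ⟨t, hTX ht⟩ := by
    obtain ⟨w, hw, hvw⟩ := hc.exists_reachable_notMem_support hind h3 ht hX v
    exact hvw.trans ((hns.preconnected ⟨w, hw⟩ ⟨t, ht⟩).map (induceHomOfLE G hTX).toHom)
  exact (connected_iff_exists_forall_reachable _).mpr ⟨_, fun v => (hreach v).symm⟩

end Walk.IsCycle

end SimpleGraph

/-- By Tutte's theorem the faces of a 3-connected plane graph are exactly its induced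
non-separating cycles, so the face `f` is encoded as an induced cycle `c` whose complement
induces a connected subgraph, with `x`, `y`, `z` on `c`. -/
theorem cofacial_triple_not_cutset_general {V : Type*} [Fintype V]
    (G : SimpleGraph V) (hG : ThreeConnected G)
    (u : V) (c : G.Walk u u) (hc : c.IsCycle)
    (hind : ∀ a ∈ c.support, ∀ b ∈ c.support, G.Adj a b → s(a, b) ∈ c.edges)
    (hns : (G.induce {v : V | v ∉ c.support}).Connected)
    (x y z : V) (hx : x ∈ c.support) (hy : y ∈ c.support) (hz : z ∈ c.support) :
    ¬ IsCutset G {x, y, z} := by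
  have hX : {x, y, z} ⊆ {v | v ∈ c.support} := by
    rintro a (rfl | rfl | rfl) <;> assumption
  exact not_not.mpr (hc.connected_induce_compl hind hG.2 hns hX)

/-- in a 3-connected plane graph, three vertices incident to a
common face are not a 3-cutset.  (By Tutte's theorem, the faces of a
3-connected plane graph are exactly its induced non-separating cycles, so the
face `f` is encoded as an induced cycle `c` whose complement induces a
connected subgraph, with `x`, `y`, `z` on `c`.) -/
theorem cofacial_triple_not_cutset {V : Type*} [Fintype V] [DecidableEq V]
    (G : SimpleGraph V) (hG : ThreeConnected G) (hpl : IsPlanar G)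
    (u : V) (c : G.Walk u u) (hc : c.IsCycle)
    (hind : ∀ a ∈ c.support, ∀ b ∈ c.support, G.Adj a b → s(a, b) ∈ c.edges)
    (hns : (G.induce {v : V | v ∉ c.support}).Connected)
    (x y z : V) (hx : x ∈ c.support) (hy : y ∈ c.support) (hz : z ∈ c.support) :
    ¬ IsCutset G {x, y, z} :=
  cofacial_triple_not_cutset_general G hG u c hc hind hns x y z hx hy hz
end
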